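/- Let a be a probability distribution with V(a) > 0, let (t_n) be a moderate sequence, and for x ∈ ℝ set k_n(a,x) = exp( n·H(a) + x·n·t_n ). Then: (i) for every x ≤ 0, lim_{n→∞} (1/(n t_n²)) · ln[ ∑_i { (a^{⊗n})_i : (a^{⊗n})_i ≥ 1/k_n(a,x) } ] = −x²/(2 V(a)); and (ii) for every x ≥ 0, lim_{n→∞} (1/(n t_n²)) · ln[ ∑_i { (a^{⊗n})_i : (a^{⊗n})_i ≤ 1/k_n(a,x) } ] = −x²/(2 V(a)). Here each sum runs over all entries of a^{⊗n} satisfying the stated magnitude condition. -/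

import Mathlib

open Finset Filter Real Topology

noncomputable section

/-- A probability distribution on a finite type: nonnegative entries summing to 1. -/
def IsProbDist {α : Type*} [Fintype α] (a : α → ℝ) : Prop :=
  (∀ i, 0 ≤ a i) ∧ ∑ i, a i = 1

/-- A sharp distribution: a single entry equal to 1, all others 0. -/
def IsSharp {α : Type*} [Fintype α] (a : α → ℝ) : Prop :=
  ∃ i, a i = 1 ∧ ∀ j, j ≠ i → a j = 0

/-- The uniform distribution: all entries equal to `1 / |α|`. -/
def IsUniform {α : Type*} [Fintype α] (a : α → ℝ) : Prop :=
  ∀ i, a i = 1 / (Fintype.card α : ℝ)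

/-- Tensor (Kronecker) product of two vectors. -/
def tensor {α β : Type*} (a : α → ℝ) (b : β → ℝ) : α × β → ℝ :=
  fun x => a x.1 * b x.2

/-- `n`-fold tensor power of a vector. -/
def tpow {α : Type*} (a : α → ℝ) (n : ℕ) : (Fin n → α) → ℝ :=
  fun f => ∏ j, a (f j)

/-- Shannon entropy (natural logarithm, with the convention `0 · ln 0 = 0`). -/
def shannonH {α : Type*} [Fintype α] (a : α → ℝ) : ℝ :=
  -∑ i, a i * Real.log (a i)

/-- Entropy variance `V(a) = ∑ i, a i (ln a i + H(a))²`. -/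
def entV {α : Type*} [Fintype α] (a : α → ℝ) : ℝ :=
  ∑ i, a i * (Real.log (a i) + shannonH a) ^ 2

/-- Relative entropy `D(a‖b)`. -/
def relD {α : Type*} [Fintype α] (a b : α → ℝ) : ℝ :=
  ∑ i, a i * Real.log (a i / b i)

/-- Relative entropy variance `V(a‖b)`. -/
def relV {α : Type*} [Fintype α] (a b : α → ℝ) : ℝ :=
  ∑ i, a i * (Real.log (a i / b i) - relD a b) ^ 2

/-- Total variation distance. -/
def tvd {α : Type*} [Fintype α] (a b : α → ℝ) : ℝ :=
  (1 / 2) * ∑ i, |a i - b i|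

/-- Fidelity `F(a,b) = (∑ i √(a i · b i))²`. -/
def fid {α : Type*} [Fintype α] (a b : α → ℝ) : ℝ :=
  (∑ i, Real.sqrt (a i * b i)) ^ 2

/-- The entries of `a` sorted in non-increasing order, as a vector on `Fin (card α)`. -/
def descSorted {α : Type*} [Fintype α] (a : α → ℝ) : Fin (Fintype.card α) → ℝ :=
  fun i =>
    a ((Fintype.equivFin α).symm
      (Tuple.sort (fun j => -a ((Fintype.equivFin α).symm j)) i))

/-- `headSum a K = ∑_{1 ≤ i ≤ K} a^↓_i` (1-based indices `i`, comparison `(i : ℝ) ≤ K`,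
equivalently `i ≤ ⌊K⌋`). -/
def headSum {α : Type*} [Fintype α] (a : α → ℝ) (K : ℝ) : ℝ :=
  ∑ i ∈ Finset.univ.filter (fun i : Fin (Fintype.card α) => ((i : ℕ) + 1 : ℝ) ≤ K),
    descSorted a i

/-- `tailSum a K = ∑_{i ≥ K} a^↓_i` (1-based indices `i`, comparison `K ≤ (i : ℝ)`,
equivalently `i ≥ ⌈K⌉`). -/
def tailSum {α : Type*} [Fintype α] (a : α → ℝ) (K : ℝ) : ℝ :=
  ∑ i ∈ Finset.univ.filter (fun i : Fin (Fintype.card α) => K ≤ ((i : ℕ) + 1 : ℝ)),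
    descSorted a i

/-- `a` majorises `b` (written `a ≻ b`): every partial sum of the non-increasingly sorted
`a` dominates the corresponding partial sum of sorted `b` (shorter vectors padded with zeros). -/
def Maj {α β : Type*} [Fintype α] [Fintype β] (a : α → ℝ) (b : β → ℝ) : Prop :=
  ∀ j : ℕ, headSum b (j : ℝ) ≤ headSum a (j : ℝ)

/-- `a ≻_ε b`: approximate majorisation (from above) with total variation error:
there is a probability distribution `b̃` with `a ≻ b̃` and `δ(b, b̃) ≤ ε`. -/
def ApproxMajTV {α β : Type*} [Fintype α] [Fintype β] (a : α → ℝ) (b : β → ℝ) (ε : ℝ) : Prop :=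
  ∃ bt : β → ℝ, IsProbDist bt ∧ Maj a bt ∧ tvd b bt ≤ ε

/-- `a ≺_ε b`: approximate majorisation (from below) with total variation error:
there is a probability distribution `b̃` with `a ≺ b̃` and `δ(b, b̃) ≤ ε`. -/
def ApproxSubMajTV {α β : Type*} [Fintype α] [Fintype β] (a : α → ℝ) (b : β → ℝ) (ε : ℝ) : Prop :=
  ∃ bt : β → ℝ, IsProbDist bt ∧ Maj bt a ∧ tvd b bt ≤ ε

/-- A moderate sequence: `t n → 0` and `√n · t n → +∞`. -/
def ModerateSeq (t : ℕ → ℝ) : Prop :=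
  Tendsto t atTop (𝓝 0) ∧ Tendsto (fun n : ℕ => Real.sqrt (n : ℝ) * t n) atTop atTop

/-- The uniform distribution on `Fin d`. -/
def unif (d : ℕ) : Fin d → ℝ := fun _ => 1 / (d : ℝ)

/-- The embedding map `Γ` associated with `γ_i = c_i / N`: for each `i` it produces
`c_i` entries equal to `a_i / c_i`. -/
def embed {d : ℕ} (c : Fin d → ℕ) (a : Fin d → ℝ) : (Σ i : Fin d, Fin (c i)) → ℝ :=
  fun x => a x.1 / (c x.1 : ℝ)

/-- Cut-and-pile modification of the sorted version of `a`, with cut at `K`: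
the first entry absorbs the total mass of entries at (1-based) positions `≥ K`,
entries at positions `1 < i < K` are unchanged, and entries at positions `≥ K` are set to 0. -/
def cutAndPile {α : Type*} [Fintype α] (a : α → ℝ) (K : ℝ) : Fin (Fintype.card α) → ℝ :=
  fun i =>
    if (i : ℕ) = 0 then descSorted a i + tailSum a K
    else if ((i : ℕ) + 1 : ℝ) < K then descSorted a i else 0

/-!
Write `ℓ = log a` (for (i)) or `ℓ = -log a` (for (ii)); on the support of `a^{⊗n}` the magnitude
condition becomes `∑ j, ℓ (f j) ≥ n μ + x n t_n` for the sum of `n` independent draws of `ℓ`, which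
has mean `μ = ∓H(a)` and variance `V = V(a)`. Everything then follows from the cumulant generating
function `ψ(s) = log ∑ i, a i exp (s ℓ i) = μ s + V s² / 2 + o(s²)`, evaluated at `s = y t_n`:

* Chernoff: the tail is at most `exp (n ψ(y t_n) - y t_n (n μ + x n t_n))
  = exp (n t_n² (y² V / 2 - y x + o(1)))`, optimal at `y = x / V`.
* Tilting `a` by `exp (s ℓ)` moves the mean of the sum to `n ψ'(s) ≈ n (μ + y V t_n)`. For `y V`
  slightly above `x`, Chebyshev under the tilted law (variance `O(n) ≪ (n t_n)²`) puts half of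
  its mass in a window of width `O(n t_n)` above the threshold, where the likelihood ratio is
  `exp (n t_n² (y² V / 2 - y x' + o(1)))` for any `x' > y V`.
-/

lemma Finset.sum_filter_congr_of_ne_zero {ι M : Type*} [AddCommMonoid M] {s : Finset ι}
    (g : ι → M) {P Q : ι → Prop} [DecidablePred P] [DecidablePred Q]
    (h : ∀ i ∈ s, g i ≠ 0 → (P i ↔ Q i)) :
    ∑ i ∈ s.filter P, g i = ∑ i ∈ s.filter Q, g i := by
  simp only [sum_filter]
  refine sum_congr rfl fun i hi => ?_
  by_cases hg : g i = 0
  · simp [hg]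
  · simp [h i hi hg]

lemma ModerateSeq.eventually_pos {t : ℕ → ℝ} (ht : ModerateSeq t) : ∀ᶠ n in atTop, 0 < t n := by
  filter_upwards [ht.2.eventually_gt_atTop 0] with n hn
  exact pos_of_mul_pos_right hn (sqrt_nonneg _)

lemma ModerateSeq.tendsto_mul_sq {t : ℕ → ℝ} (ht : ModerateSeq t) :
    Tendsto (fun n : ℕ => n * t n ^ 2) atTop atTop :=
  ((tendsto_pow_atTop two_ne_zero).comp ht.2).congr fun n => by
    simp [mul_pow, sq_sqrt (Nat.cast_nonneg n)]

lemma tendsto_comp_mul_div_pow {g : ℝ → ℝ} {L : ℝ} {k : ℕ}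
    (hg : Tendsto (fun s => g s / s ^ k) (𝓝[≠] 0) (𝓝 L)) {ι : Type*} {l : Filter ι}
    {t : ι → ℝ} (ht : Tendsto t l (𝓝 0)) (ht' : ∀ᶠ n in l, t n ≠ 0) {y : ℝ} (hy : y ≠ 0) :
    Tendsto (fun n => g (y * t n) / t n ^ k) l (𝓝 (y ^ k * L)) := by
  have hyt : Tendsto (fun n => y * t n) l (𝓝[≠] 0) :=
    tendsto_nhdsWithin_iff.2 ⟨by simpa using ht.const_mul y, ht'.mono fun n h => mul_ne_zero hy h⟩
  refine ((hg.comp hyt).const_mul (y ^ k)).congr' (ht'.mono fun n h => ?_)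
  simp only [Function.comp_apply, mul_pow]
  field_simp

namespace FinDist

section Tpow

variable {α : Type*} {p ℓ : α → ℝ}

lemma tpow_nonneg (hp : ∀ i, 0 ≤ p i) {n : ℕ} (f : Fin n → α) : 0 ≤ tpow p n f :=
  prod_nonneg fun j _ => hp (f j)

lemma tpow_mul_exp (s : ℝ) {n : ℕ} (f : Fin n → α) :
    tpow (fun i => p i * exp (s * ℓ i)) n f = tpow p n f * exp (s * ∑ j, ℓ (f j)) := by
  simp only [tpow, prod_mul_distrib, mul_sum, exp_sum]

lemma log_tpow {n : ℕ} {f : Fin n → α} (hf : tpow p n f ≠ 0) :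
    log (tpow p n f) = ∑ j, log (p (f j)) :=
  log_prod fun j _ => (prod_ne_zero_iff.1 hf) j (mem_univ j)

end Tpow

variable {α : Type*} [Fintype α]

def mean (p ℓ : α → ℝ) : ℝ := ∑ i, p i * ℓ i

def var (p ℓ : α → ℝ) : ℝ := ∑ i, p i * (ℓ i - mean p ℓ) ^ 2

def mgf (p ℓ : α → ℝ) (s : ℝ) : ℝ := ∑ i, p i * exp (s * ℓ i)

def cgf (p ℓ : α → ℝ) (s : ℝ) : ℝ := log (mgf p ℓ s)

def tilt (p ℓ : α → ℝ) (s : ℝ) (i : α) : ℝ := p i * exp (s * ℓ i) / mgf p ℓ s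

def upperTail (p ℓ : α → ℝ) (n : ℕ) (c : ℝ) : ℝ :=
  ∑ f ∈ univ.filter (fun f : Fin n → α => c ≤ ∑ j, ℓ (f j)), tpow p n f

variable {p ℓ X : α → ℝ}

lemma sum_tpow (hp : ∑ i, p i = 1) (n : ℕ) : ∑ f : Fin n → α, tpow p n f = 1 := by
  simp only [tpow, ← Fintype.sum_pow, hp, one_pow]

lemma mgf_pos (hp : IsProbDist p) (s : ℝ) : 0 < mgf p ℓ s := by
  obtain ⟨i, hi⟩ : ∃ i, p i ≠ 0 := by
    by_contra! h
    simpa [h] using hp.2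
  exact sum_pos' (fun j _ => mul_nonneg (hp.1 j) (exp_nonneg _))
    ⟨i, mem_univ i, mul_pos ((hp.1 i).lt_of_ne' hi) (exp_pos _)⟩

lemma isProbDist_tilt (hp : IsProbDist p) (s : ℝ) : IsProbDist (tilt p ℓ s) :=
  ⟨fun i => div_nonneg (mul_nonneg (hp.1 i) (exp_nonneg _)) (mgf_pos hp s).le, by
    simp only [tilt]; rw [← sum_div]; exact div_self (mgf_pos hp s).ne'⟩

lemma mgf_zero (hp : ∑ i, p i = 1) : mgf p ℓ 0 = 1 := by
  simp [mgf, hp]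

lemma tilt_zero (hp : ∑ i, p i = 1) : tilt p ℓ 0 = p := by
  ext i
  simp [tilt, mgf_zero hp]

lemma var_eq (hp : ∑ i, p i = 1) : var p ℓ = ∑ i, p i * ℓ i ^ 2 - mean p ℓ ^ 2 := by
  have h : ∀ i, p i * (ℓ i - mean p ℓ) ^ 2
      = p i * ℓ i ^ 2 - 2 * mean p ℓ * (p i * ℓ i) + mean p ℓ ^ 2 * p i := fun i => by ring
  rw [var, sum_congr rfl fun i _ => h i, sum_add_distrib, sum_sub_distrib, ← mul_sum, ← mul_sum,
    hp, show ∑ i, p i * ℓ i = mean p ℓ from rfl]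
  ring

lemma var_le (hp : IsProbDist p) : var p ℓ ≤ ∑ i, ℓ i ^ 2 := by
  have hle : ∑ i, p i * ℓ i ^ 2 ≤ ∑ i, ℓ i ^ 2 := sum_le_sum fun i _ => by
    have : p i ≤ 1 := hp.2 ▸ single_le_sum (fun j _ => hp.1 j) (mem_univ i)
    nlinarith [sq_nonneg (ℓ i), hp.1 i]
  nlinarith [var_eq (ℓ := ℓ) hp.2, sq_nonneg (mean p ℓ)]

lemma tpow_eq_exp_mul_tpow_tilt (hp : IsProbDist p) (s : ℝ) {n : ℕ} (f : Fin n → α) :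
    tpow p n f = exp (n * cgf p ℓ s - s * ∑ j, ℓ (f j)) * tpow (tilt p ℓ s) n f := by
  have hZ := mgf_pos (ℓ := ℓ) hp s
  have htilt : tpow (tilt p ℓ s) n f = tpow p n f * exp (s * ∑ j, ℓ (f j)) / mgf p ℓ s ^ n := by
    rw [← tpow_mul_exp]
    simp only [tpow, tilt, prod_div_distrib, prod_const, card_univ, Fintype.card_fin]
  rw [htilt, exp_sub, cgf, ← log_pow, exp_log (pow_pos hZ n)]
  field_simp

lemma sum_tpow_succ (p : α → ℝ) {n : ℕ} (F : (Fin (n + 1) → α) → ℝ) :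
    ∑ f, tpow p (n + 1) f * F f = ∑ i, p i * ∑ f, tpow p n f * F (Fin.cons i f) := by
  rw [← (Fin.consEquiv fun _ => α).sum_comp, Fintype.sum_prod_type]
  refine sum_congr rfl fun i _ => ?_
  rw [mul_sum]
  refine sum_congr rfl fun f _ => ?_
  show tpow p (n + 1) (Fin.cons i f) * F (Fin.cons i f) = p i * (tpow p n f * F (Fin.cons i f))
  simp only [tpow, Fin.prod_univ_succ, Fin.cons_zero, Fin.cons_succ, mul_assoc]

lemma sum_tpow_mul_sum (hp : ∑ i, p i = 1) (hX : ∑ i, p i * X i = 0) (n : ℕ) :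
    ∑ f : Fin n → α, tpow p n f * ∑ j, X (f j) = 0 := by
  induction n with
  | zero => simp
  | succ n ih =>
    simp only [sum_tpow_succ, Fin.sum_univ_succ, Fin.cons_zero, Fin.cons_succ, mul_add,
      sum_add_distrib, ← sum_mul, sum_tpow hp, ih]
    simpa using hX

lemma sum_tpow_mul_sum_sq (hp : ∑ i, p i = 1) (hX : ∑ i, p i * X i = 0) (n : ℕ) :
    ∑ f : Fin n → α, tpow p n f * (∑ j, X (f j)) ^ 2 = n * ∑ i, p i * X i ^ 2 := by
  induction n with
  | zero => simp
  | succ n ih =>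
    have hsq : ∀ (i : α) (f : Fin n → α), tpow p n f * (X i + ∑ j, X (f j)) ^ 2
        = X i ^ 2 * tpow p n f + 2 * X i * (tpow p n f * ∑ j, X (f j))
          + tpow p n f * (∑ j, X (f j)) ^ 2 := fun i f => by ring
    simp only [sum_tpow_succ, Fin.sum_univ_succ, Fin.cons_zero, Fin.cons_succ, hsq,
      sum_add_distrib, ← mul_sum, sum_tpow hp, sum_tpow_mul_sum hp hX, ih]
    simp only [mul_one, mul_zero, add_zero, mul_add, sum_add_distrib, ← sum_mul, hp]
    push_cast
    ring

lemma sum_filter_le_div_sq {ι : Type*} [Fintype ι] (w Y : ι → ℝ) (hw : ∀ i, 0 ≤ w i) {r : ℝ}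
    (hr : 0 < r) : ∑ i ∈ univ.filter (fun i => r ≤ |Y i|), w i ≤ (∑ i, w i * Y i ^ 2) / r ^ 2 := by
  rw [le_div_iff₀ (by positivity), sum_mul]
  calc ∑ i ∈ univ.filter (fun i => r ≤ |Y i|), w i * r ^ 2
      ≤ ∑ i ∈ univ.filter (fun i => r ≤ |Y i|), w i * Y i ^ 2 := by
        refine sum_le_sum fun i hi => mul_le_mul_of_nonneg_left ?_ (hw i)
        rw [← sq_abs (Y i)]
        exact pow_le_pow_left₀ hr.le (mem_filter.1 hi).2 2
    _ ≤ ∑ i, w i * Y i ^ 2 :=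
        sum_le_sum_of_subset_of_nonneg (filter_subset _ _) fun i _ _ => by
          have := hw i; positivity

lemma sum_tpow_filter_le_var (hq : IsProbDist p) (n : ℕ) {r : ℝ} (hr : 0 < r) :
    ∑ f ∈ univ.filter (fun f : Fin n → α => r ≤ |∑ j, ℓ (f j) - n * mean p ℓ|), tpow p n f
      ≤ n * var p ℓ / r ^ 2 := by
  have hcenter : ∀ f : Fin n → α, ∑ j, ℓ (f j) - n * mean p ℓ = ∑ j, (ℓ (f j) - mean p ℓ) :=
    fun f => by simp [sum_sub_distrib]
  have hX : ∑ i, p i * (ℓ i - mean p ℓ) = 0 := by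
    simp only [mul_sub, sum_sub_distrib, ← sum_mul, hq.2, one_mul]
    exact sub_self _
  refine (sum_filter_le_div_sq _ _ (tpow_nonneg hq.1) hr).trans_eq ?_
  simp only [hcenter, sum_tpow_mul_sum_sq hq.2 hX, var]

lemma upperTail_le_exp (hp : IsProbDist p) {s : ℝ} (hs : 0 ≤ s) (n : ℕ) (c : ℝ) :
    upperTail p ℓ n c ≤ exp (n * cgf p ℓ s - s * c) := by
  have hq := isProbDist_tilt (ℓ := ℓ) hp s
  calc upperTail p ℓ n c
      ≤ ∑ f ∈ univ.filter (fun f : Fin n → α => c ≤ ∑ j, ℓ (f j)),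
          exp (n * cgf p ℓ s - s * c) * tpow (tilt p ℓ s) n f := by
        refine sum_le_sum fun f hf => ?_
        rw [tpow_eq_exp_mul_tpow_tilt hp s]
        gcongr
        · exact tpow_nonneg hq.1 f
        · exact (mem_filter.1 hf).2
    _ ≤ ∑ f, exp (n * cgf p ℓ s - s * c) * tpow (tilt p ℓ s) n f :=
        sum_le_sum_of_subset_of_nonneg (filter_subset _ _) fun f _ _ =>
          mul_nonneg (exp_nonneg _) (tpow_nonneg hq.1 f)
    _ = exp (n * cgf p ℓ s - s * c) := by rw [← mul_sum, sum_tpow hq.2, mul_one]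

/-- Under the tilted law the sum lies, with probability at least `1 / 2` by Chebyshev, in the
window `[c, c']` around its mean, where the likelihood ratio against `p^{⊗n}` is at least
`exp (n ψ(s) - s c')`. -/
lemma exp_div_two_le_upperTail (hp : IsProbDist p) {s : ℝ} (hs : 0 ≤ s) {n : ℕ} {c c' r : ℝ}
    (hr : 0 < r) (hc : c + r ≤ n * mean (tilt p ℓ s) ℓ) (hc' : n * mean (tilt p ℓ s) ℓ + r ≤ c')
    (hvar : n * var (tilt p ℓ s) ℓ / r ^ 2 ≤ 1 / 2) :
    exp (n * cgf p ℓ s - s * c') / 2 ≤ upperTail p ℓ n c := by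
  set q := tilt p ℓ s
  have hq : IsProbDist q := isProbDist_tilt hp s
  set window := univ.filter (fun f : Fin n → α => |∑ j, ℓ (f j) - n * mean q ℓ| < r)
  have hwindow : 1 / 2 ≤ ∑ f ∈ window, tpow q n f := by
    have hsplit := sum_filter_add_sum_filter_not univ
      (fun f : Fin n → α => |∑ j, ℓ (f j) - n * mean q ℓ| < r) (tpow q n)
    simp only [not_lt] at hsplit
    linarith [sum_tpow hq.2 n, sum_tpow_filter_le_var (ℓ := ℓ) hq n hr]
  have hsub : window ⊆ univ.filter (fun f : Fin n → α => c ≤ ∑ j, ℓ (f j)) := fun f hf => by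
    have := abs_lt.1 (mem_filter.1 hf).2
    exact mem_filter.2 ⟨mem_univ f, by linarith⟩
  calc exp (n * cgf p ℓ s - s * c') / 2
      ≤ ∑ f ∈ window, exp (n * cgf p ℓ s - s * c') * tpow q n f := by
        rw [← mul_sum, div_eq_mul_one_div]
        exact mul_le_mul_of_nonneg_left hwindow (exp_nonneg _)
    _ ≤ ∑ f ∈ window, tpow p n f := by
        refine sum_le_sum fun f hf => ?_
        have := abs_lt.1 (mem_filter.1 hf).2
        rw [tpow_eq_exp_mul_tpow_tilt hp s]
        gcongr
        · exact tpow_nonneg hq.1 f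
        · linarith
    _ ≤ upperTail p ℓ n c :=
        sum_le_sum_of_subset_of_nonneg hsub fun f _ _ => tpow_nonneg hp.1 f

lemma hasDerivAt_sum_mul_exp (g ℓ : α → ℝ) (s : ℝ) :
    HasDerivAt (fun s => ∑ i, g i * exp (s * ℓ i)) (∑ i, g i * ℓ i * exp (s * ℓ i)) s :=
  HasDerivAt.fun_sum fun i _ => by
    simpa [mul_comm, mul_left_comm, mul_assoc] using
      ((hasDerivAt_mul_const (ℓ i)).exp).const_mul (g i) (x := s)

lemma mean_tilt_eq (s : ℝ) :
    mean (tilt p ℓ s) ℓ = (∑ i, p i * ℓ i * exp (s * ℓ i)) / mgf p ℓ s := by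
  simp only [mean, tilt, sum_div]
  exact sum_congr rfl fun i _ => by ring

lemma hasDerivAt_cgf (hp : IsProbDist p) (s : ℝ) :
    HasDerivAt (cgf p ℓ) (mean (tilt p ℓ s) ℓ) s := by
  rw [mean_tilt_eq]
  exact (hasDerivAt_sum_mul_exp p ℓ s).log (mgf_pos hp s).ne'

lemma hasDerivAt_mean_tilt_zero (hp : IsProbDist p) :
    HasDerivAt (fun s => mean (tilt p ℓ s) ℓ) (var p ℓ) 0 := by
  have h := (hasDerivAt_sum_mul_exp (fun i => p i * ℓ i) ℓ 0).div
    (hasDerivAt_sum_mul_exp p ℓ 0) (mgf_pos hp 0).ne'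
  simp only [zero_mul, exp_zero, mul_one, hp.2, one_pow, div_one] at h
  refine (h.congr_of_eventuallyEq (Eventually.of_forall fun s => mean_tilt_eq s)).congr_deriv ?_
  simp only [var_eq hp.2, mean, sq, mul_assoc]

lemma tendsto_mean_tilt_sub_div (hp : IsProbDist p) :
    Tendsto (fun s => (mean (tilt p ℓ s) ℓ - mean p ℓ) / s) (𝓝[≠] 0) (𝓝 (var p ℓ)) := by
  refine (hasDerivAt_iff_tendsto_slope.1 (hasDerivAt_mean_tilt_zero hp)).congr fun s => ?_
  rw [slope_def_field, tilt_zero hp.2, sub_zero]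

lemma tendsto_cgf_sub_div_sq (hp : IsProbDist p) :
    Tendsto (fun s => (cgf p ℓ s - mean p ℓ * s) / s ^ 2) (𝓝[≠] 0) (𝓝 (var p ℓ / 2)) := by
  have hcgf : Continuous fun s => cgf p ℓ s - mean p ℓ * s :=
    (continuous_iff_continuousAt.2 fun s => (hasDerivAt_cgf hp s).continuousAt).sub
      (continuous_const.mul continuous_id)
  refine HasDerivAt.lhopital_zero_nhdsNE (f' := fun s => mean (tilt p ℓ s) ℓ - mean p ℓ)
    (g' := fun s => 2 * s) ?_ ?_ ?_ ?_ ?_ ?_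
  · exact Eventually.of_forall fun s => by
      simpa using (hasDerivAt_cgf hp s).fun_sub ((hasDerivAt_id s).const_mul (mean p ℓ))
  · exact Eventually.of_forall fun s => by simpa using hasDerivAt_pow 2 s
  · filter_upwards [self_mem_nhdsWithin] with s hs
    exact mul_ne_zero two_ne_zero hs
  · simpa [cgf, mgf_zero hp.2] using (hcgf.tendsto 0).mono_left nhdsWithin_le_nhds
  · simpa using ((continuous_pow 2).tendsto (0 : ℝ)).mono_left nhdsWithin_le_nhds
  · refine ((tendsto_mean_tilt_sub_div hp).div_const 2).congr fun s => ?_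
    ring

variable {t : ℕ → ℝ} {x : ℝ}

lemma eventually_exp_div_two_le_upperTail (hp : IsProbDist p) (ht : ModerateSeq t) {y x' : ℝ}
    (hy : 0 < y) (hx : x < y * var p ℓ) (hx' : y * var p ℓ < x') :
    ∀ᶠ n : ℕ in atTop,
      exp (n * cgf p ℓ (y * t n) - y * t n * (n * mean p ℓ + x' * n * t n)) / 2
        ≤ upperTail p ℓ n (n * mean p ℓ + x * n * t n) := by
  obtain ⟨δ, hδ, hδx, hδx'⟩ : ∃ δ > 0, x + δ < y * var p ℓ ∧ y * var p ℓ < x' - δ :=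
    ⟨min (y * var p ℓ - x) (x' - y * var p ℓ) / 2, by positivity,
      by linarith [min_le_left (y * var p ℓ - x) (x' - y * var p ℓ)],
      by linarith [min_le_right (y * var p ℓ - x) (x' - y * var p ℓ)]⟩
  have hmean : ∀ᶠ n in atTop,
      (mean (tilt p ℓ (y * t n)) ℓ - mean p ℓ) / t n ∈ Set.Ioo (x + δ) (x' - δ) := by
    have h := tendsto_comp_mul_div_pow (k := 1)
      (by simpa using tendsto_mean_tilt_sub_div (ℓ := ℓ) hp) ht.1
      (ht.eventually_pos.mono fun n h => h.ne') hy.ne'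
    simp only [pow_one] at h
    exact h.eventually (Ioo_mem_nhds hδx hδx')
  have hbig := ht.tendsto_mul_sq.eventually_ge_atTop (2 * (∑ i, ℓ i ^ 2) / δ ^ 2)
  filter_upwards [hmean, hbig, ht.eventually_pos, ht.tendsto_mul_sq.eventually_gt_atTop 0]
    with n hm hbig htn hnt
  have hn : (0 : ℝ) < n := pos_of_mul_pos_left hnt (sq_nonneg _)
  rw [Set.mem_Ioo, lt_div_iff₀ htn, div_lt_iff₀ htn] at hm
  refine exp_div_two_le_upperTail hp (by positivity) (r := δ * (n * t n)) (by positivity)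
    (by nlinarith) (by nlinarith) ?_
  have hvar := var_le (ℓ := ℓ) (isProbDist_tilt (ℓ := ℓ) hp (y * t n))
  rw [div_le_iff₀ (by positivity)] at hbig ⊢
  calc n * var (tilt p ℓ (y * t n)) ℓ ≤ n * ∑ i, ℓ i ^ 2 := by gcongr
    _ ≤ n * (n * t n ^ 2 * δ ^ 2 / 2) := by gcongr; linarith
    _ = 1 / 2 * (δ * (n * t n)) ^ 2 := by ring

lemma eventually_lt_log_upperTail_div (hp : IsProbDist p) (ht : ModerateSeq t) {y x' : ℝ}
    (hy : 0 < y) (hx : x < y * var p ℓ) (hx' : y * var p ℓ < x') {b : ℝ}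
    (hb : b < y ^ 2 * var p ℓ / 2 - y * x') :
    ∀ᶠ n : ℕ in atTop, b < log (upperTail p ℓ n (n * mean p ℓ + x * n * t n)) / (n * t n ^ 2) := by
  have hlim : Tendsto (fun n : ℕ => (cgf p ℓ (y * t n) - mean p ℓ * (y * t n)) / t n ^ 2 - y * x'
      - log 2 * (n * t n ^ 2)⁻¹) atTop (𝓝 (y ^ 2 * (var p ℓ / 2) - y * x' - log 2 * 0)) :=
    ((tendsto_comp_mul_div_pow (tendsto_cgf_sub_div_sq hp) ht.1
      (ht.eventually_pos.mono fun n h => h.ne') hy.ne').sub_const _).sub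
      (ht.tendsto_mul_sq.inv_tendsto_atTop.const_mul _)
  rw [mul_zero, sub_zero, ← mul_div_assoc] at hlim
  filter_upwards [hlim.eventually_const_lt hb,
    eventually_exp_div_two_le_upperTail hp ht hy hx hx', ht.tendsto_mul_sq.eventually_gt_atTop 0,
    ht.eventually_pos] with n hbn hP hnt htn
  refine hbn.trans_le ?_
  have hlog := log_le_log (by positivity) hP
  rw [log_div (exp_pos _).ne' two_ne_zero, log_exp] at hlog
  rw [le_div_iff₀ hnt]
  refine le_of_eq_of_le ?_ hlog
  have hn : (n : ℝ) ≠ 0 := (pos_of_mul_pos_left hnt (sq_nonneg _)).ne'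
  field_simp
  ring

lemma eventually_log_upperTail_div_lt (hp : IsProbDist p) (ht : ModerateSeq t) {y : ℝ}
    (hy : 0 < y) (hpos : ∀ᶠ n : ℕ in atTop, 0 < upperTail p ℓ n (n * mean p ℓ + x * n * t n))
    {b : ℝ} (hb : y ^ 2 * var p ℓ / 2 - y * x < b) :
    ∀ᶠ n : ℕ in atTop, log (upperTail p ℓ n (n * mean p ℓ + x * n * t n)) / (n * t n ^ 2) < b := by
  have hlim : Tendsto (fun n : ℕ => (cgf p ℓ (y * t n) - mean p ℓ * (y * t n)) / t n ^ 2 - y * x)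
      atTop (𝓝 (y ^ 2 * (var p ℓ / 2) - y * x)) :=
    (tendsto_comp_mul_div_pow (tendsto_cgf_sub_div_sq hp) ht.1
      (ht.eventually_pos.mono fun n h => h.ne') hy.ne').sub_const _
  rw [← mul_div_assoc] at hlim
  filter_upwards [hlim.eventually_lt_const hb, hpos, ht.tendsto_mul_sq.eventually_gt_atTop 0,
    ht.eventually_pos] with n hbn hP hnt htn
  refine lt_of_le_of_lt ?_ hbn
  have hlog := log_le_log hP (upperTail_le_exp hp (mul_pos hy htn).le n
    (n * mean p ℓ + x * n * t n))
  rw [log_exp] at hlog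
  rw [div_le_iff₀ hnt]
  refine hlog.trans_eq ?_
  have hn : (n : ℝ) ≠ 0 := (pos_of_mul_pos_left hnt (sq_nonneg _)).ne'
  field_simp
  ring

theorem tendsto_log_upperTail_div (hp : IsProbDist p) (hV : 0 < var p ℓ) (ht : ModerateSeq t)
    (hx : 0 ≤ x) :
    Tendsto (fun n : ℕ => log (upperTail p ℓ n (n * mean p ℓ + x * n * t n)) / (n * t n ^ 2))
      atTop (𝓝 (-x ^ 2 / (2 * var p ℓ))) := by
  set V := var p ℓ
  have hpos : ∀ᶠ n : ℕ in atTop, 0 < upperTail p ℓ n (n * mean p ℓ + x * n * t n) :=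
    (eventually_exp_div_two_le_upperTail hp ht (y := (x + 1) / V) (x' := x + 2) (by positivity)
      (by rw [div_mul_cancel₀ _ hV.ne']; linarith) (by rw [div_mul_cancel₀ _ hV.ne']; linarith)).mono
      fun n h => (by positivity : (0 : ℝ) < _).trans_le h
  rw [tendsto_order]
  refine ⟨fun b hb => ?_, fun b hb => ?_⟩
  · -- tilt to `y V = x + ε` and count the window `[x, x + 2ε]`, then let `ε → 0`
    have hlim : Tendsto (fun ε => ((x + ε) / V) ^ 2 * V / 2 - (x + ε) / V * (x + 2 * ε))
        (𝓝[>] 0) (𝓝 (-x ^ 2 / (2 * V))) := by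
      have h := ((Continuous.tendsto (by fun_prop) 0).mono_left nhdsWithin_le_nhds :
        Tendsto (fun ε => ((x + ε) / V) ^ 2 * V / 2 - (x + ε) / V * (x + 2 * ε)) (𝓝[>] 0) _)
      convert h using 2
      field_simp
      ring
    obtain ⟨ε, hbε, hε⟩ := ((hlim.eventually (lt_mem_nhds hb)).and self_mem_nhdsWithin).exists
    have hε : 0 < ε := hε
    have hyV : (x + ε) / V * V = x + ε := div_mul_cancel₀ _ hV.ne'
    exact eventually_lt_log_upperTail_div hp ht (by positivity) (by rw [hyV]; linarith)
      (by rw [hyV]; linarith) hbε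
  · -- Chernoff with `y` slightly above the optimal `x / V`
    have hlim : Tendsto (fun y => y ^ 2 * V / 2 - y * x) (𝓝[>] (x / V)) (𝓝 (-x ^ 2 / (2 * V))) := by
      have h := ((Continuous.tendsto (by fun_prop) (x / V)).mono_left nhdsWithin_le_nhds :
        Tendsto (fun y => y ^ 2 * V / 2 - y * x) (𝓝[>] (x / V)) _)
      convert h using 2
      field_simp
      ring
    obtain ⟨y, hyb, hy⟩ := ((hlim.eventually (gt_mem_nhds hb)).and self_mem_nhdsWithin).exists
    exact eventually_log_upperTail_div_lt hp ht ((div_nonneg hx hV.le).trans_lt hy) hpos hyb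

variable (a : α → ℝ)

lemma mean_log : mean a (fun i => log (a i)) = -shannonH a :=
  (neg_neg _).symm

lemma var_log : var a (fun i => log (a i)) = entV a := by
  simp only [var, entV, mean_log, sub_neg_eq_add]

lemma mean_neg_log : mean a (fun i => -log (a i)) = shannonH a := by
  simp [mean, shannonH]

lemma var_neg_log : var a (fun i => -log (a i)) = entV a := by
  simp only [var, entV, mean_neg_log, ← neg_add', neg_sq]

variable {a}

lemma upperTail_log (ha : ∀ i, 0 ≤ a i) (n : ℕ) {u : ℝ} (hu : 0 < u) :
    upperTail a (fun i => log (a i)) n (log u)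
      = ∑ f ∈ univ.filter (fun f : Fin n → α => u ≤ tpow a n f), tpow a n f :=
  Finset.sum_filter_congr_of_ne_zero _ fun f _ hf => by
    rw [← log_tpow hf, log_le_log_iff hu ((tpow_nonneg ha f).lt_of_ne' hf)]

lemma upperTail_neg_log (ha : ∀ i, 0 ≤ a i) (n : ℕ) {u : ℝ} (hu : 0 < u) :
    upperTail a (fun i => -log (a i)) n (-log u)
      = ∑ f ∈ univ.filter (fun f : Fin n → α => tpow a n f ≤ u), tpow a n f :=
  Finset.sum_filter_congr_of_ne_zero _ fun f _ hf => by
    rw [sum_neg_distrib, ← log_tpow hf, neg_le_neg_iff,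
      log_le_log_iff ((tpow_nonneg ha f).lt_of_ne' hf) hu]

end FinDist

open FinDist

/-- Magnitude-based tail bound for tensor powers of a distribution, in the moderate
deviation regime. -/
theorem magnitude_tail_bound
    {d : ℕ} (a : Fin d → ℝ) (ha : IsProbDist a) (hVa : 0 < entV a)
    (t : ℕ → ℝ) (ht : ModerateSeq t)
    (k : ℕ → ℝ → ℝ)
    (hk : ∀ n : ℕ, ∀ x : ℝ, k n x = Real.exp ((n : ℝ) * shannonH a + x * n * t n)) :
    (∀ x ≤ (0 : ℝ), Tendsto (fun n : ℕ =>
        Real.log (∑ f ∈ Finset.univ.filter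
            (fun f : Fin n → Fin d => 1 / k n x ≤ tpow a n f), tpow a n f) /
          ((n : ℝ) * t n ^ 2))
      atTop (𝓝 (-x ^ 2 / (2 * entV a)))) ∧
    (∀ x ≥ (0 : ℝ), Tendsto (fun n : ℕ =>
        Real.log (∑ f ∈ Finset.univ.filter
            (fun f : Fin n → Fin d => tpow a n f ≤ 1 / k n x), tpow a n f) /
          ((n : ℝ) * t n ^ 2))
      atTop (𝓝 (-x ^ 2 / (2 * entV a)))) := by
  have hk_pos : ∀ n x, 0 < 1 / k n x := fun n x => by rw [hk]; positivity
  have hlog_k : ∀ n x, log (1 / k n x) = -(n * shannonH a + x * n * t n) := fun n x => by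
    rw [one_div, log_inv, hk, log_exp]
  refine ⟨fun x hx => ?_, fun x hx => ?_⟩
  · have h := tendsto_log_upperTail_div ha (var_log a ▸ hVa) ht (neg_nonneg.2 hx)
    rw [var_log, neg_sq] at h
    refine h.congr fun n => ?_
    rw [← upperTail_log ha.1 n (hk_pos n x), hlog_k, mean_log]
    ring_nf
  · have h := tendsto_log_upperTail_div ha (var_neg_log a ▸ hVa) ht hx
    rw [var_neg_log] at h
    refine h.congr fun n => ?_
    rw [← upperTail_neg_log ha.1 n (hk_pos n x), hlog_k, mean_neg_log, neg_neg]
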